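/- Let E be a normed space and 1 ≤ p ≤ q < ∞. Suppose f : E → E is such that f ∘ x ∈ BV_q([a,b],E) for every x ∈ BV_p([a,b],E). Then f is bounded on every precompact subset of E. -/

import Mathlib

open scoped ENNReal NNReal

/-- The Wiener `p`-variation of `x : ℝ → E` over `[a,b]`: the supremum over all
finite partitions `a = t₀ < … < tₙ = b` of `∑ᵢ ‖x(tᵢ) - x(tᵢ₋₁)‖ ^ p`. -/
noncomputable def pVar {E : Type*} [NormedAddCommGroup E] (p a b : ℝ) (x : ℝ → E) : ℝ≥0∞ :=
  ⨆ (n : ℕ) (t : Fin (n + 1) → ℝ) (_ : StrictMono t) (_ : t 0 = a)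
    (_ : t (Fin.last n) = b),
    ∑ i : Fin n, (‖x (t i.succ) - x (t i.castSucc)‖₊ : ℝ≥0∞) ^ p

open Set Filter Topology

/-! If `‖f‖` were unbounded on a totally bounded set `A`, points of `A` along which `‖f‖ → ∞`
have a Cauchy subsequence, and a fast enough subsequence `v` of that one has finite total
variation `∑ edist (v k) (v (k + 1))`. Running through `v` monotonically on `[a, b)` gives a step
function `x` of bounded variation, hence of finite `p`-variation since `p ≥ 1`, while `f ∘ x` is
unbounded near `b`, so already the partitions `a < s < b` make its `q`-variation infinite. -/

theorem ENNReal.sum_rpow_le_rpow_sum {ι : Type*} (s : Finset ι) (c : ι → ℝ≥0∞) {p : ℝ}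
    (hp : 1 ≤ p) : ∑ i ∈ s, c i ^ p ≤ (∑ i ∈ s, c i) ^ p := by
  classical
  induction s using Finset.induction_on with
  | empty => simp
  | insert j s hj ih =>
    rw [Finset.sum_insert hj, Finset.sum_insert hj]
    exact (add_le_add_right ih _).trans (ENNReal.add_rpow_le_rpow_add _ _ hp)

theorem Finset.sum_range_sum_Ico_of_monotone {M : Type*} [AddCommMonoid M] (d : ℕ → M)
    {u : ℕ → ℕ} (hu : Monotone u) (n : ℕ) :
    ∑ i ∈ Finset.range n, ∑ k ∈ Finset.Ico (u i) (u (i + 1)), d k =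
      ∑ k ∈ Finset.Ico (u 0) (u n), d k := by
  induction n with
  | zero => simp
  | succ n ih =>
    rw [Finset.sum_range_succ, ih, Finset.sum_Ico_consecutive _ (hu n.zero_le) (hu n.le_succ)]

theorem eVariationOn_univ_le_tsum {α : Type*} [PseudoEMetricSpace α] (v : ℕ → α) :
    eVariationOn v univ ≤ ∑' k, edist (v k) (v (k + 1)) := by
  refine iSup_le fun ⟨n, u, hu, _⟩ => ?_
  calc ∑ i ∈ Finset.range n, edist (v (u (i + 1))) (v (u i))
      ≤ ∑ i ∈ Finset.range n, ∑ k ∈ Finset.Ico (u i) (u (i + 1)), edist (v k) (v (k + 1)) :=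
        Finset.sum_le_sum fun i _ => by
          rw [edist_comm]; exact edist_le_Ico_sum_edist v (hu i.le_succ)
    _ = ∑ k ∈ Finset.Ico (u 0) (u n), edist (v k) (v (k + 1)) :=
        Finset.sum_range_sum_Ico_of_monotone _ hu n
    _ ≤ _ := ENNReal.sum_le_tsum _

theorem TotallyBounded.exists_cauchySeq_subseq {α : Type*} [PseudoMetricSpace α] {s : Set α}
    (hs : TotallyBounded s) {u : ℕ → α} (hu : ∀ n, u n ∈ s) :
    ∃ φ : ℕ → ℕ, StrictMono φ ∧ CauchySeq (u ∘ φ) := by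
  let ι : α → UniformSpace.Completion α := (↑)
  have hK : IsCompact (_root_.closure (ι '' s)) :=
    isCompact_iff_totallyBounded_isComplete.2
      ⟨(hs.image (UniformSpace.Completion.uniformContinuous_coe α)).closure,
        isClosed_closure.isComplete⟩
  obtain ⟨_, -, φ, hφ, hlim⟩ :=
    hK.tendsto_subseq fun n => subset_closure (mem_image_of_mem ι (hu n))
  exact ⟨φ, hφ, (UniformSpace.Completion.isUniformInducing_coe α).cauchy_map_iff.1 hlim.cauchySeq⟩

theorem CauchySeq.exists_subseq_eVariationOn_ne_top {α : Type*} [PseudoEMetricSpace α]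
    {u : ℕ → α} (hu : CauchySeq u) :
    ∃ φ : ℕ → ℕ, StrictMono φ ∧ eVariationOn (u ∘ φ) univ ≠ ⊤ := by
  obtain ⟨φ, hφ, hclose⟩ := hu.subseq_mem (V := fun n => {p | edist p.1 p.2 < 2⁻¹ ^ n})
    fun n => edist_mem_uniformity (ENNReal.pow_pos (by norm_num) n)
  refine ⟨φ, hφ, ne_top_of_le_ne_top (b := ∑' n : ℕ, (2⁻¹ : ℝ≥0∞) ^ n) ?_ ?_⟩
  · rw [ENNReal.tsum_geometric, ENNReal.one_sub_inv_two, inv_inv]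
    exact ENNReal.ofNat_ne_top
  · refine (eVariationOn_univ_le_tsum _).trans (ENNReal.tsum_le_tsum fun n => ?_)
    rw [edist_comm]
    exact (hclose n).le

theorem TotallyBounded.exists_seq_eVariationOn_ne_top_tendsto_atTop {α : Type*}
    [PseudoMetricSpace α] {s : Set α} (hs : TotallyBounded s) {g : α → ℝ}
    (hg : ∀ M, ∃ x ∈ s, M < g x) :
    ∃ v : ℕ → α, eVariationOn v univ ≠ ⊤ ∧ Tendsto (g ∘ v) atTop atTop := by
  choose u hus hgu using fun n : ℕ => hg n
  obtain ⟨φ, hφ, hcauchy⟩ := hs.exists_cauchySeq_subseq hus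
  obtain ⟨ψ, hψ, hvar⟩ := hcauchy.exists_subseq_eVariationOn_ne_top
  refine ⟨u ∘ φ ∘ ψ, hvar, tendsto_atTop_mono (fun n => (hgu _).le) ?_⟩
  exact tendsto_natCast_atTop_atTop.comp (hφ.comp hψ).tendsto_atTop

theorem exists_monotoneOn_Ico_tendsto_atTop {a b : ℝ} (hab : a < b) :
    ∃ (φ : ℝ → ℕ) (s : ℕ → ℝ), MonotoneOn φ (Ico a b) ∧ (∀ k, s k ∈ Ioo a b) ∧
      Tendsto (φ ∘ s) atTop atTop := by
  refine ⟨fun t => ⌊(b - a) / (b - t)⌋₊, fun k => b - (b - a) / (k + 2), ?_, fun k => ?_, ?_⟩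
  · exact fun t _ u hu htu => Nat.floor_mono <|
      div_le_div_of_nonneg_left (sub_nonneg.2 hab.le) (sub_pos.2 hu.2) (by linarith)
  · have : 0 < (b - a) / (k + 2) := div_pos (sub_pos.2 hab) (by positivity)
    refine ⟨?_, by linarith⟩
    rw [lt_sub_iff_add_lt, ← lt_sub_iff_add_lt', div_lt_iff₀ (by positivity)]
    nlinarith
  · refine (tendsto_add_atTop_nat 2).congr fun k => ?_
    rw [Function.comp_apply, sub_sub_cancel, div_div_cancel₀ (sub_ne_zero.2 hab.ne')]
    exact_mod_cast (Nat.floor_natCast (k + 2)).symm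

section pVar

variable {E : Type*} [NormedAddCommGroup E] {p a b : ℝ} {x : ℝ → E}

theorem sum_le_pVar {n : ℕ} {t : Fin (n + 1) → ℝ} (ht : StrictMono t) (ht0 : t 0 = a)
    (htn : t (Fin.last n) = b) :
    ∑ i : Fin n, (‖x (t i.succ) - x (t i.castSucc)‖₊ : ℝ≥0∞) ^ p ≤ pVar p a b x :=
  le_iSup_of_le n <| le_iSup_of_le t <| le_iSup_of_le ht <| le_iSup_of_le ht0 <|
    le_iSup_of_le htn le_rfl

theorem pVar_le {C : ℝ≥0∞}
    (h : ∀ n (t : Fin (n + 1) → ℝ), StrictMono t → t 0 = a → t (Fin.last n) = b →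
      ∑ i : Fin n, (‖x (t i.succ) - x (t i.castSucc)‖₊ : ℝ≥0∞) ^ p ≤ C) :
    pVar p a b x ≤ C :=
  iSup_le fun n => iSup_le fun t => iSup_le fun ht => iSup_le fun ht0 => iSup_le (h n t ht ht0)

theorem pVar_le_pVar_one_rpow (hp : 1 ≤ p) : pVar p a b x ≤ pVar 1 a b x ^ p :=
  pVar_le fun _ _ ht ht0 htn => (ENNReal.sum_rpow_le_rpow_sum _ _ hp).trans <|
    ENNReal.rpow_le_rpow (by simpa using sum_le_pVar (p := 1) (x := x) ht ht0 htn) (by linarith)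

theorem edist_rpow_le_pVar {s : ℝ} (hs : s ∈ Ioo a b) : edist (x s) (x a) ^ p ≤ pVar p a b x := by
  have ht : StrictMono ![a, s, b] :=
    Fin.strictMono_iff_lt_succ.2 fun i => by fin_cases i <;> simp [hs.1, hs.2]
  calc edist (x s) (x a) ^ p
      ≤ ∑ i : Fin 2, (‖x (![a, s, b] i.succ) - x (![a, s, b] i.castSucc)‖₊ : ℝ≥0∞) ^ p := by
        simp [Fin.sum_univ_two, edist_eq_enorm_sub, enorm_eq_nnnorm]
    _ ≤ pVar p a b x := sum_le_pVar ht rfl rfl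

theorem pVar_one_le_eVariationOn_add {D : ℝ≥0∞} (hD : ∀ s ∈ Ico a b, edist (x b) (x s) ≤ D) :
    pVar 1 a b x ≤ eVariationOn x (Ico a b) + D := by
  refine pVar_le fun n t ht ht0 htn => ?_
  simp only [ENNReal.rpow_one, ← enorm_eq_nnnorm, ← edist_eq_enorm_sub]
  cases n with
  | zero => simp
  | succ m =>
    have htIco : ∀ j, j ≠ Fin.last (m + 1) → t j ∈ Ico a b := fun j hj =>
      ⟨ht0 ▸ ht.monotone (Fin.zero_le j), htn ▸ ht (Fin.lt_last_iff_ne_last.2 hj)⟩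
    rw [Fin.sum_univ_castSucc]
    refine add_le_add ?_ ?_
    · let u : ℕ → ℝ := fun i => t (Fin.castSucc ⟨min i m, by omega⟩)
      have hu : Monotone u := fun i j hij => ht.monotone <| by
        simp only [Fin.castSucc_le_castSucc_iff, Fin.mk_le_mk]; omega
      calc _ = ∑ i ∈ Finset.range m, edist (x (u (i + 1))) (x (u i)) := by
              rw [← Fin.sum_univ_eq_sum_range]
              refine Finset.sum_congr rfl fun i _ => ?_
              simp only [u, min_eq_left i.isLt.le, min_eq_left (Nat.succ_le_of_lt i.isLt)]
              rfl
        _ ≤ _ := eVariationOn.sum_le hu fun i => htIco _ (Fin.castSucc_lt_last _).ne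
    · rw [Fin.succ_last, htn]
      exact hD _ (htIco _ (Fin.castSucc_lt_last _).ne)

theorem pVar_comp_ne_top {β : Type*} [LinearOrder β] {v : β → E} {φ : ℝ → β} (hp : 1 ≤ p)
    (hφ : MonotoneOn φ (Ico a b)) (hv : eVariationOn v univ ≠ ⊤) :
    pVar p a b (v ∘ φ) ≠ ⊤ := by
  have hvar : pVar 1 a b (v ∘ φ) ≤ eVariationOn v univ + eVariationOn v univ :=
    (pVar_one_le_eVariationOn_add fun _ _ =>
      eVariationOn.edist_le v (mem_univ _) (mem_univ _)).trans <|
        add_le_add (eVariationOn.comp_le_of_monotoneOn v φ hφ (mapsTo_univ _ _)) le_rfl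
  refine ne_top_of_le_ne_top ?_ (pVar_le_pVar_one_rpow hp)
  exact ENNReal.rpow_ne_top_of_nonneg (by linarith)
    (ne_top_of_le_ne_top (ENNReal.add_ne_top.2 ⟨hv, hv⟩) hvar)

theorem pVar_eq_top_of_tendsto_norm (hp : 0 < p) {s : ℕ → ℝ} (hs : ∀ k, s k ∈ Ioo a b)
    (hx : Tendsto (fun k => ‖x (s k)‖) atTop atTop) : pVar p a b x = ⊤ := by
  have hdist : Tendsto (fun k => edist (x (s k)) (x a)) atTop (𝓝 ⊤) := by
    simp only [edist_dist]
    refine ENNReal.tendsto_ofReal_atTop.comp <|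
      tendsto_atTop_mono (fun k => ?_) (tendsto_atTop_add_const_right _ (-‖x a‖) hx)
    rw [dist_eq_norm]
    linarith [norm_sub_norm_le (x (s k)) (x a)]
  have hpow := ((ENNReal.continuous_rpow_const (y := p)).tendsto ⊤).comp hdist
  rw [ENNReal.top_rpow_of_pos hp] at hpow
  exact top_le_iff.1 (le_of_tendsto' hpow fun k => edist_rpow_le_pVar (hs k))

end pVar

/-- If the composition operator generated by `f` maps `BV_p([a,b],E)` into
`BV_q([a,b],E)`, then `f` is bounded on every precompact (totally bounded) subset of `E`. -/
theorem bounded_on_precompact_of_comp_maps_BV {E : Type*} [NormedAddCommGroup E]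
    (p q a b : ℝ) (hp : 1 ≤ p) (hpq : p ≤ q) (hab : a < b)
    (f : E → E)
    (hf : ∀ x : ℝ → E, pVar p a b x ≠ ⊤ → pVar q a b (fun t => f (x t)) ≠ ⊤) :
    ∀ A : Set E, TotallyBounded A → ∃ M : ℝ, ∀ v ∈ A, ‖f v‖ ≤ M := by
  intro A hA
  by_contra! hunbdd
  obtain ⟨v, hv, hfv⟩ :=
    hA.exists_seq_eVariationOn_ne_top_tendsto_atTop (g := fun y => ‖f y‖) hunbdd
  obtain ⟨φ, s, hφ, hs, hφs⟩ := exists_monotoneOn_Ico_tendsto_atTop hab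
  exact hf (v ∘ φ) (pVar_comp_ne_top hp hφ hv)
    (pVar_eq_top_of_tendsto_norm (by linarith) hs (hfv.comp hφs))
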